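/- arXiv:2210.01962 — 4 statements merged into one kernel-verified Lean document; each statement's English description precedes it below -/
import Mathlib

section
/- The join of posets preserves the property of having no full embedding of Z: if posets P and Q each admit no full order embedding of the zigzag poset Z, then neither does P ⋈ Q. -/
open scoped NNReal

/-- The join of two posets: underlying set the disjoint union, with every
element of the first below every element of the second. -/
def Join (α β : Type) : Type := α ⊕ β

/-- Package a sum element as an element of the join. -/
def Join.mk {α β : Type} : α ⊕ β → Join α β := id

/-- Unpack an element of the join. -/
def Join.out {α β : Type} : Join α β → α ⊕ β := id

/-- The order relation of the join. -/
def joinLE {α β : Type} [LE α] [LE β] : α ⊕ β → α ⊕ β → Prop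
  | .inl a, .inl a' => a ≤ a'
  | .inr b, .inr b' => b ≤ b'
  | .inl _, .inr _ => True
  | .inr _, .inl _ => False

instance Join.instPartialOrder {α β : Type} [PartialOrder α] [PartialOrder β] :
    PartialOrder (Join α β) where
  le x y := joinLE (Join.out x) (Join.out y)
  le_refl x := by rcases hx : Join.out x with a | b <;> simp [hx, joinLE]
  le_trans x y z hxy hyz := by
    rcases hx : Join.out x with a | a <;> rcases hy : Join.out y with b | b <;>
      rcases hz : Join.out z with c | c <;>
      simp_all [joinLE] <;> exact le_trans hxy hyz
  le_antisymm x y hxy hyx := by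
    have : Join.out x = Join.out y := by
      rcases hx : Join.out x with a | a <;> rcases hy : Join.out y with b | b <;>
        simp_all [joinLE] <;> exact le_antisymm hxy hyx
    exact this

/-- The disjoint-union partial order on a sum type (no cross relations). -/
def disjOrder (α β : Type) [PartialOrder α] [PartialOrder β] : PartialOrder (α ⊕ β) :=
  inferInstance

/-- The class of expressible posets: generated from empty and singleton posets by
disjoint unions and joins, closed under order isomorphism. -/
inductive Expressible : ∀ (α : Type), PartialOrder α → Prop
  | empty (α : Type) [IsEmpty α] (o : PartialOrder α) : Expressible α o
  | single (α : Type) [Unique α] (o : PartialOrder α) : Expressible α o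
  | disj {α β : Type} [oa : PartialOrder α] [ob : PartialOrder β] :
      Expressible α oa → Expressible β ob → Expressible (α ⊕ β) (disjOrder α β)
  | join {α β : Type} [oa : PartialOrder α] [ob : PartialOrder β] :
      Expressible α oa → Expressible β ob → Expressible (Join α β) Join.instPartialOrder
  | iso {α β : Type} (oa : PartialOrder α) (ob : PartialOrder β) (e : α ≃ β)
      (he : ∀ x y, oa.le x y ↔ ob.le (e x) (e y)) :
      Expressible α oa → Expressible β ob

/-- The order relation of the zigzag poset `Z` on four elements `0,1,2,3`
(thought of as `a,b,c,d`): exactly `a < b`, `c < b`, `c < d`. -/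
abbrev ZLE : Fin 4 → Fin 4 → Prop := fun x y =>
  x = y ∨ (x = 0 ∧ y = 1) ∨ (x = 2 ∧ y = 1) ∨ (x = 2 ∧ y = 3)

theorem ZLE.refl : ∀ a, ZLE a a := by decide
theorem ZLE.trans : ∀ a b c, ZLE a b → ZLE b c → ZLE a c := by decide
theorem ZLE.antisymm : ∀ a b, ZLE a b → ZLE b a → a = b := by decide

/-- The zigzag poset `Z`. -/
def ZOrder : PartialOrder (Fin 4) where
  le := ZLE
  lt a b := ZLE a b ∧ ¬ ZLE b a
  lt_iff_le_not_ge _ _ := Iff.rfl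
  le_refl := ZLE.refl
  le_trans := ZLE.trans
  le_antisymm := ZLE.antisymm

/-- A poset admits no full embedding of the zigzag `Z`: there is no injective map
from `Z` that both preserves and reflects the order. -/
def NoZFullEmbedding (α : Type) [PartialOrder α] : Prop :=
  ¬ ∃ f : Fin 4 → α, Function.Injective f ∧ ∀ x y : Fin 4, ZLE x y ↔ f x ≤ f y

/-- Lexicographic substitution of the posets `Q i` into the poset `P`. -/
def SubstOrder {ι : Type} (P : PartialOrder ι) {β : ι → Type}
    (Q : ∀ i, PartialOrder (β i)) : PartialOrder (Σ i, β i) :=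
  letI := P
  letI : ∀ i, PartialOrder (β i) := Q
  inferInstanceAs (PartialOrder (Σₗ i, β i))

/-- The tropical dependence operation: maximal chain-sum of weights over a poset. -/
noncomputable def tropBox {ι : Type} (P : PartialOrder ι) (a : ι → ℝ≥0) : ℝ≥0 :=
  sSup {s : ℝ≥0 | ∃ l : List ι, l.Chain' (fun i j => P.lt i j) ∧ s = (l.map a).sum}

/-- The discrete partial order. -/
def discreteOrder (ι : Type) : PartialOrder ι where
  le x y := x = y
  le_refl _ := rfl
  le_trans _ _ _ h h' := Eq.trans h h'
  le_antisymm _ _ h _ := h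

/-- Connectivity of a poset: any two elements are joined by a zigzag of comparisons. -/
def PosetConnected (α : Type) [PartialOrder α] : Prop :=
  ∀ x y : α, Relation.ReflTransGen (fun u v : α => u ≤ v ∨ v ≤ u) x y

/-!
Elements of `Z` that are incomparable must be sent to the same summand of `P ⋈ Q`, since every
element of `P` lies below every element of `Q`. The incomparability graph of `Z` is connected
(the path `c — a — d — b`), so a full embedding of `Z` into `P ⋈ Q` lands entirely in `P` or
entirely in `Q`, where it is a full embedding of `Z` into that summand.
-/

open Set

def IsZFullEmbedding {α : Type} [PartialOrder α] (f : Fin 4 → α) : Prop :=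
  Function.Injective f ∧ ∀ x y : Fin 4, ZLE x y ↔ f x ≤ f y

namespace IsZFullEmbedding

variable {α γ : Type} [PartialOrder α] [PartialOrder γ]

theorem of_comp {f : Fin 4 → α} (g : α ↪o γ) (h : IsZFullEmbedding (g ∘ f)) :
    IsZFullEmbedding f :=
  ⟨h.1.of_comp, fun x y => (h.2 x y).trans g.le_iff_le⟩

theorem forall_or_forall_not {F : Fin 4 → γ} (hF : IsZFullEmbedding F) (p : γ → Prop)
    (hp : ∀ x y, ¬ x ≤ y → ¬ y ≤ x → (p x ↔ p y)) :
    (∀ i, p (F i)) ∨ ∀ i, ¬ p (F i) := by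
  have hinc : ∀ i j, ¬ ZLE i j → ¬ ZLE j i → (p (F i) ↔ p (F j)) := fun i j hij hji =>
    hp _ _ (mt (hF.2 i j).2 hij) (mt (hF.2 j i).2 hji)
  have h02 := hinc 0 2 (by decide) (by decide)
  have h03 := hinc 0 3 (by decide) (by decide)
  have h13 := hinc 1 3 (by decide) (by decide)
  by_cases h0 : p (F 0)
  · exact Or.inl fun i => by fin_cases i <;> tauto
  · exact Or.inr fun i => by fin_cases i <;> tauto

end IsZFullEmbedding

namespace Join

variable {α β : Type} [PartialOrder α] [PartialOrder β]

def inl : α ↪o Join α β :=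
  OrderEmbedding.ofMapLEIff (fun a => Join.mk (.inl a)) fun _ _ => Iff.rfl

def inr : β ↪o Join α β :=
  OrderEmbedding.ofMapLEIff (fun b => Join.mk (.inr b)) fun _ _ => Iff.rfl

theorem inl_le_inr (a : α) (b : β) : inl a ≤ (inr b : Join α β) := trivial

theorem not_inr_le_inl (a : α) (b : β) : ¬ (inr b : Join α β) ≤ inl a := id

theorem inl_ne_inr (a : α) (b : β) : inl a ≠ (inr b : Join α β) := fun h =>
  not_inr_le_inl a b (h ▸ le_rfl)

theorem mem_range_inl_or_mem_range_inr (x : Join α β) :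
    x ∈ range (inl : α → Join α β) ∨ x ∈ range (inr : β → Join α β) := by
  rcases x with a | b
  exacts [Or.inl ⟨a, rfl⟩, Or.inr ⟨b, rfl⟩]

theorem mem_range_inl_iff_of_incomparable {x y : Join α β} (hxy : ¬ x ≤ y) (hyx : ¬ y ≤ x) :
    x ∈ range (inl : α → Join α β) ↔ y ∈ range (inl : α → Join α β) := by
  rcases mem_range_inl_or_mem_range_inr x with ⟨a, rfl⟩ | ⟨b, rfl⟩ <;>
    rcases mem_range_inl_or_mem_range_inr y with ⟨a', rfl⟩ | ⟨b', rfl⟩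
  · exact iff_of_true ⟨a, rfl⟩ ⟨a', rfl⟩
  · exact absurd (inl_le_inr a b') hxy
  · exact absurd (inl_le_inr a' b) hyx
  · exact iff_of_false (fun ⟨a, h⟩ => inl_ne_inr a b h) fun ⟨a, h⟩ => inl_ne_inr a b' h

end Join

/-- The join of posets preserves having no full embedding of the zigzag `Z`. -/
theorem noZ_join {α β : Type} [PartialOrder α] [PartialOrder β]
    (ha : NoZFullEmbedding α) (hb : NoZFullEmbedding β) :
    NoZFullEmbedding (Join α β) := by
  rintro ⟨F, hF : IsZFullEmbedding F⟩
  rcases hF.forall_or_forall_not _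
      fun _ _ => Join.mem_range_inl_iff_of_incomparable with hl | hr
  · obtain ⟨f, rfl⟩ := range_subset_range_iff_exists_comp.1 (range_subset_iff.2 hl)
    exact ha ⟨f, hF.of_comp Join.inl⟩
  · have hrange : range F ⊆ range (Join.inr : β → Join α β) := range_subset_iff.2 fun i =>
      (Join.mem_range_inl_or_mem_range_inr (F i)).resolve_left (hr i)
    obtain ⟨f, rfl⟩ := range_subset_range_iff_exists_comp.1 hrange
    exact hb ⟨f, hF.of_comp Join.inr⟩
end

section
/- Every finite poset with no full embedding of the zigzag poset Z is expressible. -/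
open scoped NNReal

/-!
A full embedding of `Z` is an induced `P₄` in the comparability graph read with its orientation,
and every induced `P₄` of a comparability graph is oriented as `Z` or its dual (which is again `Z`).
So a `Z`-free poset has a `P₄`-free comparability graph, and by Seinsche's theorem, once it has
two elements, either its comparability graph or its incomparability graph is disconnected. In the
first case the poset is the disjoint union of a component and the rest; in the second, the
elements outside a component `A` of the incomparability graph are each above all or below all of
`A`, which yields a splitting as a join. Induction on the number of elements finishes the proof.
-/

namespace SimpleGraph

variable {V W : Type*} {G : SimpleGraph V}

structure IsInducedP4 (G : SimpleGraph V) (a b c d : V) : Prop where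
  adj_ab : G.Adj a b
  adj_bc : G.Adj b c
  adj_cd : G.Adj c d
  not_adj_ac : ¬G.Adj a c
  not_adj_ad : ¬G.Adj a d
  not_adj_bd : ¬G.Adj b d
  ne_ac : a ≠ c
  ne_ad : a ≠ d
  ne_bd : b ≠ d

namespace IsInducedP4

variable {a b c d : V}

theorem reverse (h : G.IsInducedP4 a b c d) : G.IsInducedP4 d c b a where
  adj_ab := h.adj_cd.symm
  adj_bc := h.adj_bc.symm
  adj_cd := h.adj_ab.symm
  not_adj_ac := fun h' => h.not_adj_bd h'.symm
  not_adj_ad := fun h' => h.not_adj_ad h'.symm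
  not_adj_bd := fun h' => h.not_adj_ac h'.symm
  ne_ac := h.ne_bd.symm
  ne_ad := h.ne_ad.symm
  ne_bd := h.ne_ac.symm

theorem compl (h : G.IsInducedP4 a b c d) : Gᶜ.IsInducedP4 b d a c where
  adj_ab := ⟨h.ne_bd, h.not_adj_bd⟩
  adj_bc := ⟨h.ne_ad.symm, fun h' => h.not_adj_ad h'.symm⟩
  adj_cd := ⟨h.ne_ac, h.not_adj_ac⟩
  not_adj_ac := fun h' => h'.2 h.adj_ab.symm
  not_adj_ad := fun h' => h'.2 h.adj_bc
  not_adj_bd := fun h' => h'.2 h.adj_cd.symm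
  ne_ac := h.adj_ab.ne'
  ne_ad := h.adj_bc.ne
  ne_bd := h.adj_cd.ne'

theorem of_compl (h : Gᶜ.IsInducedP4 a b c d) : G.IsInducedP4 b d a c :=
  compl_compl G ▸ h.compl

theorem map {H : SimpleGraph W} (f : G ↪g H) (h : G.IsInducedP4 a b c d) :
    H.IsInducedP4 (f a) (f b) (f c) (f d) where
  adj_ab := f.map_adj_iff.2 h.adj_ab
  adj_bc := f.map_adj_iff.2 h.adj_bc
  adj_cd := f.map_adj_iff.2 h.adj_cd
  not_adj_ac := f.map_adj_iff.not.2 h.not_adj_ac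
  not_adj_ad := f.map_adj_iff.not.2 h.not_adj_ad
  not_adj_bd := f.map_adj_iff.not.2 h.not_adj_bd
  ne_ac := f.injective.ne h.ne_ac
  ne_ad := f.injective.ne h.ne_ad
  ne_bd := f.injective.ne h.ne_bd

end IsInducedP4

theorem compl_induce (s : Set V) : (G.induce s)ᶜ = Gᶜ.induce s := by
  ext a b
  simp [Subtype.ext_iff]

theorem Reachable.iff_of_adj {P : V → Prop} {x y : V} (h : G.Reachable x y)
    (hP : ∀ u w, G.Reachable x u → G.Adj u w → (P u ↔ P w)) : P x ↔ P y := by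
  rw [reachable_iff_reflTransGen] at h
  induction h with
  | refl => rfl
  | tail hxu huw ih =>
    exact ih.trans (hP _ _ ((reachable_iff_reflTransGen _ _).2 hxu) huw)

variable {v : V}

theorem Preconnected.exists_reachable_induce_compl_singleton_adj (hG : G.Preconnected)
    (u : ({v}ᶜ : Set V)) : ∃ a : ({v}ᶜ : Set V), (G.induce {v}ᶜ).Reachable u a ∧ G.Adj a v := by
  obtain ⟨p⟩ := hG u v
  let S : Set V := {z | ∃ hz : z ≠ v, (G.induce {v}ᶜ).Reachable u ⟨z, hz⟩}
  obtain ⟨e, -, ⟨hfst, hreach⟩, hsnd⟩ := p.exists_boundary_dart S ⟨u.2, .rfl⟩ (fun h => h.1 rfl)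
  refine ⟨⟨e.fst, hfst⟩, hreach, ?_⟩
  by_cases he : e.snd = v
  · exact he ▸ e.adj
  · exact absurd ⟨he, hreach.trans
      (show (G.induce {v}ᶜ).Adj ⟨_, hfst⟩ ⟨_, he⟩ from e.adj).reachable⟩ hsnd

/-- Two neighbours `s`, `t` of `v` lie in different components of `G - v`; a non-neighbour of `v`
would give an edge `b - a` with `a ∼ v ≁ b`, and then `b - a - v - s` or `b - a - v - t` is an
induced `P₄`. -/
theorem Preconnected.adj_of_not_preconnected_induce_compl_singleton
    (hfree : ∀ a b c d, ¬G.IsInducedP4 a b c d) (hG : G.Preconnected)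
    (hv : ¬(G.induce {v}ᶜ).Preconnected) (u : V) (hu : u ≠ v) : G.Adj v u := by
  set G' := G.induce {v}ᶜ
  obtain ⟨x, y, hxy⟩ : ∃ x y, ¬G'.Reachable x y := by simpa [Preconnected] using hv
  obtain ⟨s, hxs, hsv⟩ := hG.exists_reachable_induce_compl_singleton_adj x
  obtain ⟨t, hyt, htv⟩ := hG.exists_reachable_induce_compl_singleton_adj y
  have hst : ¬(G'.Reachable s t) := fun h => hxy (hxs.trans (h.trans hyt.symm))
  by_contra hvu
  obtain ⟨r, ⟨p⟩, hrv⟩ := hG.exists_reachable_induce_compl_singleton_adj ⟨u, hu⟩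
  obtain ⟨e, -, hb, ha⟩ := p.exists_boundary_dart {z | ¬G.Adj z v} (fun h => hvu h.symm)
    (not_not.2 hrv)
  obtain ⟨w, haw, hwv⟩ : ∃ w, ¬G'.Reachable e.snd w ∧ G.Adj w v := by
    by_cases has : G'.Reachable e.snd s
    · exact ⟨t, fun hat => hst (has.symm.trans hat), htv⟩
    · exact ⟨s, has, hsv⟩
  refine hfree _ _ _ _ ⟨e.adj, not_not.1 ha, hwv.symm, hb, fun h => haw ?_,
    fun h => haw (show G'.Adj _ _ from h).reachable, e.fst.2, fun h => haw ?_,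
    fun h => haw (Subtype.ext h ▸ .rfl)⟩
  · exact e.adj.symm.reachable.trans (show G'.Adj _ _ from h).reachable
  · exact Subtype.ext h ▸ e.adj.symm.reachable

/-- Seinsche's theorem. -/
theorem Preconnected.exists_isInducedP4 [Finite V] [Nontrivial V] (hG : G.Preconnected)
    (hGc : Gᶜ.Preconnected) : ∃ a b c d, G.IsInducedP4 a b c d := by
  induction hn : Nat.card V using Nat.strong_induction_on generalizing V with
  | _ n ih =>
  by_contra! hfree
  obtain ⟨v⟩ := (inferInstance : Nontrivial V).to_nonempty
  obtain ⟨u, hvu⟩ := hG.exists_adj_of_nontrivial v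
  obtain ⟨w, hvw⟩ := hGc.exists_adj_of_nontrivial v
  have hG' : (G.induce {v}ᶜ).Preconnected := by
    by_contra h
    exact hvw.2 (hG.adj_of_not_preconnected_induce_compl_singleton hfree h w hvw.ne')
  have hGc' : (G.induce {v}ᶜ)ᶜ.Preconnected := by
    rw [compl_induce]
    by_contra h
    exact (hGc.adj_of_not_preconnected_induce_compl_singleton
      (fun a b c d hP => hfree _ _ _ _ hP.of_compl) h u hvu.ne').2 hvu
  have : Nontrivial ({v}ᶜ : Set V) :=
    ⟨⟨u, hvu.ne'⟩, ⟨w, hvw.ne'⟩, fun h => hvw.2 (by cases h; exact hvu)⟩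
  obtain ⟨a, b, c, d, hP⟩ :=
    ih _ (hn ▸ Finite.card_subtype_lt (x := v) (by simp)) hG' hGc' rfl
  exact hfree _ _ _ _ (hP.map (Embedding.induce _))

end SimpleGraph

open SimpleGraph

def comparabilityGraph (α : Type*) [LE α] : SimpleGraph α :=
  SimpleGraph.fromRel (· ≤ ·)

section Preorder

variable {α : Type*} [Preorder α] {x y : α}

theorem comparabilityGraph_adj : (comparabilityGraph α).Adj x y ↔ x ≠ y ∧ (x ≤ y ∨ y ≤ x) :=
  fromRel_adj ..

theorem incomparable_of_not_comparabilityGraph_adj (hxy : x ≠ y)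
    (h : ¬(comparabilityGraph α).Adj x y) : ¬x ≤ y ∧ ¬y ≤ x := by
  simpa [comparabilityGraph_adj, hxy, not_or] using h

theorem le_iff_le_of_incomparable {p p' q : α} (hpp' : ¬p ≤ p' ∧ ¬p' ≤ p)
    (hp : p ≤ q ∨ q ≤ p) (hp' : p' ≤ q ∨ q ≤ p') : p ≤ q ↔ p' ≤ q :=
  ⟨fun h => hp'.resolve_right fun h' => hpp'.1 (h.trans h'),
    fun h => hp.resolve_right fun h' => hpp'.2 (h.trans h')⟩

theorem le_or_le_of_reachable_compl_comparabilityGraph {p q : α}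
    (hp : (comparabilityGraph α)ᶜ.Reachable x p) (hq : ¬(comparabilityGraph α)ᶜ.Reachable x q) :
    p ≤ q ∨ q ≤ p := by
  have hpq : p ≠ q := fun h => hq (h ▸ hp)
  by_contra h
  exact hq (hp.trans (Adj.reachable ⟨hpq, fun h' => h (comparabilityGraph_adj.1 h').2⟩))

theorem le_iff_le_of_reachable_compl_comparabilityGraph {p q : α}
    (hp : (comparabilityGraph α)ᶜ.Reachable x p) (hq : ¬(comparabilityGraph α)ᶜ.Reachable x q) :
    x ≤ q ↔ p ≤ q :=
  hp.iff_of_adj fun _ _ hu huw =>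
    le_iff_le_of_incomparable (incomparable_of_not_comparabilityGraph_adj huw.1 huw.2)
      (le_or_le_of_reachable_compl_comparabilityGraph hu hq)
      (le_or_le_of_reachable_compl_comparabilityGraph (hu.trans huw.reachable) hq)

theorem exists_incomparable_split (h : ¬(comparabilityGraph α).Preconnected) :
    ∃ s : Set α, s.Nonempty ∧ sᶜ.Nonempty ∧ ∀ p ∈ s, ∀ q ∉ s, ¬p ≤ q ∧ ¬q ≤ p := by
  obtain ⟨x, y, hxy⟩ : ∃ x y, ¬(comparabilityGraph α).Reachable x y := by
    simpa [Preconnected] using h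
  refine ⟨{z | (comparabilityGraph α).Reachable x z}, ⟨x, .rfl⟩, ⟨y, hxy⟩, fun p hp q hq => ?_⟩
  exact incomparable_of_not_comparabilityGraph_adj (fun hpq => hq (hpq ▸ hp))
    fun hpq => hq (hp.trans hpq.reachable)

end Preorder

/-- Let `A` be the component of `x` in the incomparability graph: everything outside `A` is
comparable to all of `A`, hence lies entirely above or entirely below `A`. -/
theorem exists_le_split {α : Type*} [PartialOrder α]
    (h : ¬(comparabilityGraph α)ᶜ.Preconnected) :
    ∃ s : Set α, s.Nonempty ∧ sᶜ.Nonempty ∧ ∀ p ∈ s, ∀ q ∉ s, p ≤ q := by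
  obtain ⟨x, y, hxy⟩ : ∃ x y, ¬(comparabilityGraph α)ᶜ.Reachable x y := by
    simpa [Preconnected] using h
  set A := {z | (comparabilityGraph α)ᶜ.Reachable x z}
  by_cases hup : ∃ r, r ∉ A ∧ ¬r ≤ x
  · obtain ⟨r, hrA, hrx⟩ := hup
    refine ⟨{q | q ∈ A ∨ q ≤ x}, ⟨x, Or.inl .rfl⟩, ⟨r, by simp [hrA, hrx]⟩, ?_⟩
    rintro p hp q hq
    obtain ⟨hqA, hqx⟩ := not_or.1 hq
    have hxq : x ≤ q :=
      (le_or_le_of_reachable_compl_comparabilityGraph .rfl hqA).resolve_right hqx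
    rcases hp with hp | hp
    · exact (le_iff_le_of_reachable_compl_comparabilityGraph hp hqA).1 hxq
    · exact hp.trans hxq
  · push Not at hup
    refine ⟨Aᶜ, ⟨y, hxy⟩, ⟨x, by simp [A]⟩, fun p hp q hq => ?_⟩
    replace hq : q ∈ A := not_not.1 hq
    have hxp : ¬x ≤ p := fun hxp => hp (le_antisymm hxp (hup p hp) ▸ .rfl)
    exact (le_or_le_of_reachable_compl_comparabilityGraph hq hp).resolve_left
      fun hqp => hxp ((le_iff_le_of_reachable_compl_comparabilityGraph hq hp).2 hqp)

section Expressible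

variable {α : Type} [PartialOrder α]

/-- A `P₄` `a - b - c - d` in the comparability graph is oriented `a < b > c < d` or dually. -/
theorem not_noZFullEmbedding_of_isInducedP4 {a b c d : α}
    (h : (comparabilityGraph α).IsInducedP4 a b c d) : ¬NoZFullEmbedding α := by
  wlog hcb : c ≤ b generalizing a b c d
  · exact this h.reverse ((comparabilityGraph_adj.1 h.adj_bc).2.resolve_right hcb)
  obtain ⟨hac, hca⟩ := incomparable_of_not_comparabilityGraph_adj h.ne_ac h.not_adj_ac
  obtain ⟨had, hda⟩ := incomparable_of_not_comparabilityGraph_adj h.ne_ad h.not_adj_ad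
  obtain ⟨hbd, hdb⟩ := incomparable_of_not_comparabilityGraph_adj h.ne_bd h.not_adj_bd
  have hab : a ≤ b :=
    (comparabilityGraph_adj.1 h.adj_ab).2.resolve_right fun hba => hca (hcb.trans hba)
  have hcd : c ≤ d :=
    (comparabilityGraph_adj.1 h.adj_cd).2.resolve_right fun hdc => hdb (hdc.trans hcb)
  have hba : ¬b ≤ a := fun hba => hca (hcb.trans hba)
  have hbc : ¬b ≤ c := fun hbc => hac (hab.trans hbc)
  have hdc : ¬d ≤ c := fun hdc => hdb (hdc.trans hcb)
  refine fun hZ => hZ ⟨![a, b, c, d], fun i j hij => ?_, fun i j => ?_⟩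
  · fin_cases i <;> fin_cases j <;>
      simp_all [h.adj_ab.ne, h.adj_bc.ne, h.adj_cd.ne, h.ne_ac, h.ne_ad, h.ne_bd]
  · fin_cases i <;> fin_cases j <;> simp_all [ZLE]

theorem NoZFullEmbedding.subtype (h : NoZFullEmbedding α) (s : Set α) : NoZFullEmbedding s :=
  fun ⟨f, hinj, hf⟩ => h ⟨fun i => f i, Subtype.val_injective.comp hinj,
    fun x y => (hf x y).trans Subtype.coe_le_coe.symm⟩

theorem Expressible.of_subsingleton [Subsingleton α] : Expressible α ‹_› := by
  rcases isEmpty_or_nonempty α with hα | ⟨⟨x⟩⟩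
  · exact .empty α _
  · have : Unique α := uniqueOfSubsingleton x
    exact .single α _

theorem Expressible.of_incomparable_split (s : Set α)
    (hs : ∀ p ∈ s, ∀ q ∉ s, ¬p ≤ q ∧ ¬q ≤ p)
    (h₁ : Expressible s inferInstance) (h₂ : Expressible ↥sᶜ inferInstance) :
    Expressible α ‹_› := by
  classical
  refine .iso (disjOrder s ↥sᶜ) _ (Equiv.Set.sumCompl s) ?_ (.disj h₁ h₂)
  rintro (x | x) (y | y)
  · exact Sum.inl_le_inl_iff.trans Subtype.coe_le_coe
  · exact iff_of_false Sum.not_inl_le_inr (hs x x.2 y y.2).1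
  · exact iff_of_false Sum.not_inr_le_inl (hs y y.2 x x.2).2
  · exact Sum.inr_le_inr_iff.trans Subtype.coe_le_coe

theorem Expressible.of_le_split (s : Set α) (hs : ∀ p ∈ s, ∀ q ∉ s, p ≤ q)
    (h₁ : Expressible s inferInstance) (h₂ : Expressible ↥sᶜ inferInstance) :
    Expressible α ‹_› := by
  classical
  refine .iso Join.instPartialOrder _ (Equiv.Set.sumCompl s) ?_ (.join h₁ h₂)
  rintro (x | x) (y | y)
  · exact Subtype.coe_le_coe
  · exact iff_of_true trivial (hs x x.2 y y.2)
  · exact iff_of_false id fun hxy =>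
      x.2 ((le_antisymm hxy (hs y y.2 x x.2) : (x : α) = y) ▸ y.2)
  · exact Subtype.coe_le_coe

end Expressible

/-- Every finite poset with no full embedding of the zigzag `Z` is expressible. -/
theorem noZ_expressible {α : Type} [Fintype α] (o : PartialOrder α)
    (h : @NoZFullEmbedding α o) : Expressible α o := by
  induction hn : Fintype.card α using Nat.strong_induction_on generalizing α with
  | _ n ih =>
  classical
  have hpart (s : Set α) (hs : sᶜ.Nonempty) : Expressible s inferInstance :=
    ih _ (hn ▸ Fintype.card_subtype_lt (x := hs.some) hs.some_mem) _ (h.subtype s) rfl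
  rcases subsingleton_or_nontrivial α with hα | hα
  · exact .of_subsingleton
  by_cases hG : (comparabilityGraph α).Preconnected
  · have hGc : ¬(comparabilityGraph α)ᶜ.Preconnected := fun hGc =>
      have ⟨_, _, _, _, hP⟩ := hG.exists_isInducedP4 hGc
      not_noZFullEmbedding_of_isInducedP4 hP h
    obtain ⟨s, hs, hs', hsplit⟩ := exists_le_split hGc
    exact .of_le_split s hsplit (hpart s hs') (hpart sᶜ (by rwa [compl_compl]))
  · obtain ⟨s, hs, hs', hsplit⟩ := exists_incomparable_split hG
    exact .of_incomparable_split s hsplit (hpart s hs') (hpart sᶜ (by rwa [compl_compl]))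
end

section
/- Every connected finite poset P with no full embedding of Z and more than one element decomposes as a join: letting P_max be the set of maximal elements of P, P_⊥ the set of elements strictly below every maximal element, and P_⊤ its complement, both P_⊥ and P_⊤ are nonempty and P is order-isomorphic to P_⊥ ⋈ P_⊤. -/
open scoped NNReal

/-!
Call `x` *low* if `x` lies strictly below every maximal element. The forbidden zigzag gives the
basic exchange step: if `a < b`, `c < b`, `c < d` with `d` maximal and `a` not below `d`, then
`c ≤ a`, since otherwise `a, b, c, d` would be a full copy of `Z`.

A low element exists: take `x` lying below the largest number of maximal elements. If some
maximal `n` were not above `x`, connectivity yields `z` strictly below both a maximal element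
above `x` and a maximal element not above `x`; the exchange step forces `z < x`, so `z` lies
below strictly more maximal elements than `x`. Finally every low `x` is below every non-low `y`:
pick maximal `m₀ > y` and maximal `m₁` not above `y`, and apply the exchange step to
`y < m₀`, `x < m₀`, `x < m₁`.
-/

theorem exists_le_isMax {α : Type} [Preorder α] [Finite α] (x : α) : ∃ m, x ≤ m ∧ IsMax m := by
  obtain ⟨m, hxm, hm⟩ := Finite.exists_le_maximal (p := fun _ : α => True) trivial
  exact ⟨m, hxm, fun b hb => hm.le_of_ge trivial hb⟩

theorem Relation.ReflTransGen.exists_mem_notMem {α : Type} {r : α → α → Prop} {s : Set α}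
    {a b : α} (h : ReflTransGen r a b) (ha : a ∈ s) (hb : b ∉ s) :
    ∃ u ∈ s, ∃ v ∉ s, r u v := by
  induction h with
  | refl => exact absurd ha hb
  | @tail c _ _ hcb ih =>
    by_cases hc : c ∈ s
    · exact ⟨c, hc, _, hb, hcb⟩
    · exact ih hc

namespace PosetConnected

variable {α : Type} [PartialOrder α]

theorem exists_lt [Nontrivial α] (hconn : PosetConnected α) : ∃ u v : α, u < v := by
  obtain ⟨a, b, hab⟩ := exists_pair_ne α
  obtain ⟨u, rfl, v, hv, huv⟩ :=
    (hconn a b).exists_mem_notMem (s := {a}) rfl (Ne.symm hab)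
  exact huv.elim (fun h => ⟨u, v, h.lt_of_ne (Ne.symm hv)⟩) fun h => ⟨v, u, h.lt_of_ne hv⟩

theorem exists_common_lt_of_isMax [Finite α] (hconn : PosetConnected α) {s : Set α}
    (hs : ∀ m ∈ s, IsMax m) {m n : α} (hm : m ∈ s) (hn : IsMax n) (hns : n ∉ s) :
    ∃ z, ∃ m' ∈ s, ∃ n', IsMax n' ∧ n' ∉ s ∧ z < m' ∧ z < n' := by
  have hn' : n ∉ {y | ∃ m ∈ s, y ≤ m} := by
    rintro ⟨m, hm, hnm⟩
    exact hns (le_antisymm hnm (hn hnm) ▸ hm)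
  obtain ⟨u, ⟨m', hm', hum'⟩, v, hv, huv⟩ :=
    (hconn m n).exists_mem_notMem (s := {y | ∃ m ∈ s, y ≤ m}) ⟨m, hm, le_rfl⟩ hn'
  have hvu : ¬ v ≤ u := fun h => hv ⟨m', hm', h.trans hum'⟩
  obtain ⟨n', hvn', hn'⟩ := exists_le_isMax v
  have huv : u < v := (huv.resolve_right hvu).lt_of_not_ge hvu
  refine ⟨u, m', hm', n', hn', fun h => hv ⟨n', h, hvn'⟩, ?_, huv.trans_le hvn'⟩
  exact hum'.lt_of_ne fun h => (hs m' hm').not_lt (h ▸ huv)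

end PosetConnected

namespace NoZFullEmbedding

variable {α : Type} [PartialOrder α]

theorem le_of_lt_of_lt (hZ : NoZFullEmbedding α) {a b c d : α} (hd : IsMax d)
    (hab : a < b) (hcb : c < b) (hcd : c < d) (had : ¬ a < d) : c ≤ a := by
  by_contra hca
  have hac : ¬ a ≤ c := fun h => had (h.trans_lt hcd)
  have hdb : ¬ d ≤ b := fun h => had (hab.trans_le (hd h))
  have hbd : ¬ b ≤ d := fun h => had (hab.trans_le h)
  have hda : ¬ d ≤ a := fun h => hdb (h.trans hab.le)
  have had' : ¬ a ≤ d := fun h => hda (h.eq_of_not_lt had).ge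
  have hba : ¬ b ≤ a := hab.not_ge
  have hbc : ¬ b ≤ c := hcb.not_ge
  have hdc : ¬ d ≤ c := hcd.not_ge
  have hf : ∀ i j : Fin 4, ZLE i j ↔ ![a, b, c, d] i ≤ ![a, b, c, d] j := by
    intro i j
    fin_cases i <;> fin_cases j <;> simp [ZLE, *, hab.le, hcb.le, hcd.le]
  exact hZ ⟨_, fun i j h => ZLE.antisymm i j ((hf i j).2 h.le) ((hf j i).2 h.ge), hf⟩

theorem exists_forall_isMax_lt [Finite α] [Nontrivial α] (hconn : PosetConnected α)
    (hZ : NoZFullEmbedding α) : ∃ x : α, ∀ m, IsMax m → x < m := by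
  let U : α → Set α := fun x => {m | IsMax m ∧ x < m}
  obtain ⟨x, hx⟩ := Finite.exists_max fun x => (U x).ncard
  refine ⟨x, fun n hn => by_contra fun hxn => ?_⟩
  obtain ⟨m, hm⟩ : (U x).Nonempty := by
    obtain ⟨u, v, huv⟩ := hconn.exists_lt
    obtain ⟨m, hvm, hm⟩ := exists_le_isMax v
    have hu : (U u).Nonempty := ⟨m, hm, huv.trans_le hvm⟩
    rw [← Set.ncard_pos] at hu ⊢
    exact hu.trans_le (hx u)
  obtain ⟨z, m₁, ⟨-, hxm₁⟩, m₂, hm₂, hxm₂, hzm₁, hzm₂⟩ :=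
    hconn.exists_common_lt_of_isMax (fun m hm => hm.1) hm hn (fun h => hxn h.2)
  have hzx : z ≤ x := hZ.le_of_lt_of_lt hm₂ hxm₁ hzm₁ hzm₂ fun h => hxm₂ ⟨hm₂, h⟩
  have hU : U x ⊂ U z :=
    (Set.ssubset_iff_of_subset fun m (hm : m ∈ U x) => (⟨hm.1, hzx.trans_lt hm.2⟩ : m ∈ U z)).2
      ⟨m₂, ⟨hm₂, hzm₂⟩, hxm₂⟩
  exact (Set.ncard_lt_ncard hU).not_ge (hx z)

theorem lt_of_forall_isMax_lt [Finite α] (hZ : NoZFullEmbedding α) {x y : α}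
    (hx : ∀ m, IsMax m → x < m) (hy : ¬ ∀ m, IsMax m → y < m) : x < y := by
  push Not at hy
  obtain ⟨m₁, hm₁, hym₁⟩ := hy
  obtain ⟨m₀, hym₀, hm₀⟩ := exists_le_isMax y
  obtain rfl | hym₀ := hym₀.eq_or_lt
  · exact hx y hm₀
  have hxy : x ≤ y := hZ.le_of_lt_of_lt hm₁ hym₀ (hx m₀ hm₀) (hx m₁ hm₁) hym₁
  exact hxy.lt_of_ne (by rintro rfl; exact hym₁ (hx m₁ hm₁))

end NoZFullEmbedding

def Join.orderIsoOfLE {α : Type} [PartialOrder α] (s : Set α) [DecidablePred (· ∈ s)]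
    (h : ∀ x ∈ s, ∀ y ∉ s, x ≤ y) : α ≃o Join s (sᶜ : Set α) where
  toEquiv := (Equiv.Set.sumCompl s).symm
  map_rel_iff' {x y} := by
    change joinLE ((Equiv.Set.sumCompl s).symm x) ((Equiv.Set.sumCompl s).symm y) ↔ x ≤ y
    by_cases hx : x ∈ s <;> by_cases hy : y ∈ s <;>
      simp only [Equiv.Set.sumCompl_symm_apply_of_mem, Equiv.Set.sumCompl_symm_apply_of_notMem,
        joinLE, hx, hy, not_false_eq_true, Subtype.mk_le_mk, true_iff, false_iff]
    · exact h x hx y hy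
    · exact fun hxy => hx (le_antisymm hxy (h y hy x hx) ▸ hy)

theorem Join.orderIsoOfLE_apply_of_mem {α : Type} [PartialOrder α] {s : Set α}
    [DecidablePred (· ∈ s)] (h : ∀ x ∈ s, ∀ y ∉ s, x ≤ y) {x : α} (hx : x ∈ s) :
    Join.orderIsoOfLE s h x = Join.mk (Sum.inl ⟨x, hx⟩) :=
  Equiv.Set.sumCompl_symm_apply_of_mem hx

theorem Join.orderIsoOfLE_apply_of_notMem {α : Type} [PartialOrder α] {s : Set α}
    [DecidablePred (· ∈ s)] (h : ∀ x ∈ s, ∀ y ∉ s, x ≤ y) {x : α} (hx : x ∉ s) :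
    Join.orderIsoOfLE s h x = Join.mk (Sum.inr ⟨x, hx⟩) :=
  Equiv.Set.sumCompl_symm_apply_of_notMem hx

/-- A connected finite `Z`-free poset with more than one element decomposes as the
join of the elements strictly below every maximal element and the rest. -/
theorem connected_noZ_join_decomposition {α : Type} [Fintype α] [PartialOrder α]
    (hconn : PosetConnected α) (hZ : NoZFullEmbedding α) (hcard : 1 < Fintype.card α)
    (Pbot : Set α) (hPbot : Pbot = {x | ∀ m : α, (∀ y, m ≤ y → y = m) → x < m})
    (Ptop : Set α) (hPtop : Ptop = Pbotᶜ) :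
    Pbot.Nonempty ∧ Ptop.Nonempty ∧
      ∃ e : α ≃o Join ↥Pbot ↥Ptop,
        (∀ (x : α) (hx : x ∈ Pbot), e x = Join.mk (Sum.inl ⟨x, hx⟩)) ∧
        (∀ (x : α) (hx : x ∈ Ptop), e x = Join.mk (Sum.inr ⟨x, hx⟩)) := by
  classical
  subst hPtop
  have hmem (x : α) : x ∈ Pbot ↔ ∀ m, IsMax m → x < m := by
    rw [hPbot]
    exact forall_congr' fun m =>
      imp_congr_left ⟨fun h y hy => (h y hy).le, fun h y hy => (h.eq_of_le hy).symm⟩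
  have : Nontrivial α := Fintype.one_lt_card_iff_nontrivial.mp hcard
  obtain ⟨x, hx⟩ := hZ.exists_forall_isMax_lt hconn
  obtain ⟨m, -, hm⟩ := exists_le_isMax x
  have hle : ∀ x ∈ Pbot, ∀ y ∉ Pbot, x ≤ y := fun x hx y hy =>
    (hZ.lt_of_forall_isMax_lt ((hmem x).1 hx) (mt (hmem y).2 hy)).le
  exact ⟨⟨x, (hmem x).2 hx⟩, ⟨m, fun h => ((hmem m).1 h m hm).false⟩,
    Join.orderIsoOfLE Pbot hle, fun _ => Join.orderIsoOfLE_apply_of_mem hle,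
    fun _ => Join.orderIsoOfLE_apply_of_notMem hle⟩
end

section
/- Expressible posets are closed under lexicographic substitution: if P is an expressible poset on {1,...,n} and P_1,...,P_n are expressible posets, then P ∘ (P_1,...,P_n) is expressible. -/
open scoped NNReal

/-! Induct on the expressibility of `P`. Substituting into a singleton gives back the single
`P_i`; substituting into a disjoint union (join) of two posets is the disjoint union (join) of the
two substitutions into the parts; and relabelling `P` by an isomorphism relabels the
substitution. -/

namespace Sigma

variable {ι κ : Type*} {α : ι → Type*} {r : ι → ι → Prop} {s : ∀ i, α i → α i → Prop}

theorem lex_mk_mk_iff_of_ne {i j : ι} (hij : i ≠ j) {a : α i} {b : α j} :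
    Lex r s ⟨i, a⟩ ⟨j, b⟩ ↔ r i j := by
  rw [lex_iff]
  exact or_iff_left fun ⟨h, _⟩ => hij h

theorem lex_mk_mk_self_iff [Std.Irrefl r] {i : ι} {a b : α i} :
    Lex r s ⟨i, a⟩ ⟨i, b⟩ ↔ s i a b := by
  simp [lex_iff, irrefl]

theorem lex_mk_mk_comp_iff {f : κ → ι} (hf : Function.Injective f) {k k' : κ} {a : α (f k)}
    {b : α (f k')} :
    Lex r s ⟨f k, a⟩ ⟨f k', b⟩ ↔
      Lex (fun k k' => r (f k) (f k')) (fun k => s (f k)) ⟨k, a⟩ ⟨k', b⟩ := by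
  constructor
  · rw [lex_iff]
    rintro (h | ⟨h, hs⟩)
    · exact Lex.left _ _ h
    · obtain rfl := hf h
      exact Lex.right _ _ hs
  · rintro (⟨_, _, h⟩ | ⟨_, _, h⟩)
    · exact Lex.left _ _ h
    · exact Lex.right _ _ h

end Sigma

section SubstOrder

variable {ι κ : Type} {β : ι → Type} (P : PartialOrder ι) (Q : ∀ i, PartialOrder (β i))

theorem substOrder_le_iff {a b : Σ i, β i} :
    (SubstOrder P Q).le a b ↔ Sigma.Lex P.lt (fun i => (Q i).le) a b := Iff.rfl

theorem substOrder_mk_le_mk_iff {i : ι} {a b : β i} :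
    (SubstOrder P Q).le ⟨i, a⟩ ⟨i, b⟩ ↔ (Q i).le a b :=
  letI := P
  Sigma.lex_mk_mk_self_iff

theorem substOrder_mk_le_mk_iff_of_ne {i j : ι} (hij : i ≠ j) {a : β i} {b : β j} :
    (SubstOrder P Q).le ⟨i, a⟩ ⟨j, b⟩ ↔ P.lt i j :=
  Sigma.lex_mk_mk_iff_of_ne hij

variable {P} in
theorem substOrder_mk_le_mk_comp_iff {P' : PartialOrder κ} {f : κ → ι}
    (hf : ∀ k k', P'.le k k' ↔ P.le (f k) (f k')) {k k' : κ} {a : β (f k)} {b : β (f k')} :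
    (SubstOrder P Q).le ⟨f k, a⟩ ⟨f k', b⟩ ↔
      (SubstOrder P' fun k => Q (f k)).le ⟨k, a⟩ ⟨k', b⟩ := by
  let := P
  let := P'
  have hf_inj : Function.Injective f := fun k k' h =>
    le_antisymm ((hf k k').2 h.le) ((hf k' k).2 h.ge)
  have hlt : (fun k k' => f k < f k') = P'.lt := by
    funext k k'
    exact propext (by simp only [lt_iff_le_not_ge, hf])
  rw [substOrder_le_iff, substOrder_le_iff, Sigma.lex_mk_mk_comp_iff hf_inj, hlt]

end SubstOrder

section SumIndex

variable {A B : Type} (oa : PartialOrder A) (ob : PartialOrder B) {β : A ⊕ B → Type}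
  (Q : ∀ i, PartialOrder (β i))

theorem disjOrder_substOrder_le_iff (x y : (Σ a, β (.inl a)) ⊕ (Σ b, β (.inr b))) :
    (@disjOrder _ _ (SubstOrder oa fun a => Q (.inl a)) (SubstOrder ob fun b => Q (.inr b))).le
        x y ↔
      (SubstOrder (disjOrder A B) Q).le ((Equiv.sumSigmaDistrib β).symm x)
        ((Equiv.sumSigmaDistrib β).symm y) := by
  rcases x with ⟨a, x⟩ | ⟨b, x⟩ <;> rcases y with ⟨a', y⟩ | ⟨b', y⟩
  · exact Sum.liftRel_inl_inl.trans
      (substOrder_mk_le_mk_comp_iff Q fun _ _ => Sum.liftRel_inl_inl.symm).symm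
  · exact iff_of_false Sum.not_liftRel_inl_inr
      ((substOrder_mk_le_mk_iff_of_ne _ Q Sum.inl_ne_inr).not.2 Sum.not_liftRel_inl_inr)
  · exact iff_of_false Sum.not_liftRel_inr_inl
      ((substOrder_mk_le_mk_iff_of_ne _ Q Sum.inr_ne_inl).not.2 Sum.not_liftRel_inr_inl)
  · exact Sum.liftRel_inr_inr.trans
      (substOrder_mk_le_mk_comp_iff Q fun _ _ => Sum.liftRel_inr_inr.symm).symm

end SumIndex

section JoinIndex

variable {A B : Type} (oa : PartialOrder A) (ob : PartialOrder B) {β : Join A B → Type}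
  (Q : ∀ i, PartialOrder (β i))

theorem join_substOrder_le_iff (x y : (Σ a, β (.inl a)) ⊕ (Σ b, β (.inr b))) :
    (@Join.instPartialOrder _ _ (SubstOrder oa fun a => Q (.inl a))
        (SubstOrder ob fun b => Q (.inr b))).le x y ↔
      (SubstOrder Join.instPartialOrder Q).le ((Equiv.sumSigmaDistrib β).symm x)
        ((Equiv.sumSigmaDistrib β).symm y) := by
  rcases x with ⟨a, x⟩ | ⟨b, x⟩ <;> rcases y with ⟨a', y⟩ | ⟨b', y⟩
  · exact (substOrder_mk_le_mk_comp_iff (P' := oa) (f := Sum.inl) Q fun _ _ => Iff.rfl).symm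
  · exact iff_of_true trivial
      ((substOrder_mk_le_mk_iff_of_ne _ Q Sum.inl_ne_inr).2 ⟨trivial, id⟩)
  · exact iff_of_false id
      ((substOrder_mk_le_mk_iff_of_ne _ Q Sum.inr_ne_inl).not.2 fun h => h.1)
  · exact (substOrder_mk_le_mk_comp_iff (P' := ob) (f := Sum.inr) Q fun _ _ => Iff.rfl).symm

end JoinIndex

theorem Expressible.substOrder {ι : Type} {P : PartialOrder ι} (hP : Expressible ι P)
    {β : ι → Type} (Q : ∀ i, PartialOrder (β i)) (hQ : ∀ i, Expressible (β i) (Q i)) :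
    Expressible (Σ i, β i) (SubstOrder P Q) := by
  induction hP with
  | empty ι P =>
    have : IsEmpty (Σ i, β i) := ⟨fun x => isEmptyElim x.1⟩
    exact .empty _ _
  | single ι P =>
    exact .iso _ _ (Equiv.uniqueSigma β).symm (fun _ _ => (substOrder_mk_le_mk_iff P Q).symm)
      (hQ default)
  | @disj A B oa ob _ _ ihA ihB =>
    refine .iso _ _ (Equiv.sumSigmaDistrib β).symm ?_
      (@Expressible.disj _ _ (SubstOrder oa _) (SubstOrder ob _) (ihA _ fun _ => hQ _)
        (ihB _ fun _ => hQ _))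
    exact disjOrder_substOrder_le_iff oa ob Q
  | @join A B oa ob _ _ ihA ihB =>
    refine .iso _ _ (Equiv.sumSigmaDistrib β).symm ?_
      (@Expressible.join _ _ (SubstOrder oa _) (SubstOrder ob _) (ihA _ fun _ => hQ _)
        (ihB _ fun _ => hQ _))
    exact join_substOrder_le_iff oa ob Q
  | iso oa ob e he _ ih =>
    exact .iso _ _ (Equiv.sigmaCongrLeft e) (fun ⟨_, _⟩ ⟨_, _⟩ =>
      (substOrder_mk_le_mk_comp_iff Q he).symm) (ih _ fun _ => hQ _)

/-- Expressible posets are closed under lexicographic substitution. -/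
theorem expressible_substOrder {n : ℕ} (P : PartialOrder (Fin n)) {β : Fin n → Type}
    (Q : ∀ i, PartialOrder (β i)) (hP : Expressible (Fin n) P)
    (hQ : ∀ i, Expressible (β i) (Q i)) :
    Expressible (Σ i, β i) (SubstOrder P Q) :=
  hP.substOrder Q hQ
end
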